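/- arXiv:2504.00301 — 3 statements merged into one kernel-verified Lean document; each statement's English description precedes it below -/
import Mathlib

section
/- For every integer N ≥ 1 and every parameter tuple (a,p) ∈ P^{2N}, there exists a unique stationary tuple for (a,p): there is exactly one vector s ∈ ℝ^N with 0 < s_1 < s_2 < ... < s_N such that a_i = Σ_{j=1}^N p_j·(s_i − s_j + s_1)_+ for every i ∈ {1,...,N}. -/
/-!
Write `F_S(x) = p₁ x + ∑_{j ≥ 2} p_j (x - S_j + S_1)₊`. Since the entries of a stationary tuple are
positive, stationary tuples are exactly the increasing solutions of `a_i = F_S(S_i)`, `1 ≤ i ≤ N`.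
Fixing `S_1 = σ`, the equations with `i ≥ 2` form a monotone system (increasing in `S_i`,
decreasing in the other `S_j`), solvable by Knaster–Tarski; comparing two solutions where their
difference is largest gives `p₁ (S_i(σ) - S_i(τ)) ≤ (∑_{j ≥ 2} p_j) (τ - σ)₊`. So the solution
`S(σ)` is Lipschitz and antitone in `σ`, and `g(σ) = F_{S(σ)}(σ)` is continuous and strictly
increasing, with `g(0) = 0` and `g(a₁ / p₁) ≥ a₁`: the intermediate value theorem gives a
stationary tuple, and strict monotonicity of `g` its uniqueness.
-/

open Filter Topology
open scoped Classical

noncomputable section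

/-- The positive part `x₊ = max x 0` of a real number. -/
def pos' (x : ℝ) : ℝ := max x 0

/-- `qq p i = p 1 + ... + p i` (so `qq p 0 = 0`). -/
def qq (p : ℕ → ℝ) (i : ℕ) : ℝ := ∑ j ∈ Finset.Icc 1 i, p j

/-- `dpar a i = a i - a (i-1)`, with the convention `a 0 = 0`. -/
def dpar (a : ℕ → ℝ) (i : ℕ) : ℝ := if i = 1 then a 1 else a i - a (i - 1)

/-- `(a, p)` is a parameter tuple in `P^{2N}`:
`0 < a 1 < a 2 < ... < a N` and `p 1, ..., p N > 0`. -/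
def IsParam (N : ℕ) (a p : ℕ → ℝ) : Prop :=
  0 < a 1 ∧ (∀ i, 1 ≤ i → i < N → a i < a (i + 1)) ∧ (∀ i, 1 ≤ i → i ≤ N → 0 < p i)

/-- `s` is a stationary tuple for the parameters `(a, p)`:
`0 < s 1 < ... < s N` and `a i = ∑_{j=1}^N p j * (s i - s j + s 1)₊` for `1 ≤ i ≤ N`. -/
def IsStationaryTuple (N : ℕ) (a p s : ℕ → ℝ) : Prop :=
  0 < s 1 ∧ (∀ i, 1 ≤ i → i < N → s i < s (i + 1)) ∧
  ∀ i, 1 ≤ i → i ≤ N → a i = ∑ j ∈ Finset.Icc 1 N, p j * pos' (s i - s j + s 1)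

/-- The inverse of (the restriction to `[0, ∞)` of) a function `y : ℝ → ℝ`. -/
def tinv (y : ℝ → ℝ) (x : ℝ) : ℝ := Function.invFunOn y (Set.Ici 0) x

/-- The right derivative of `y` at `t` (the derivative of `y` at `t` within `[t, ∞)`). -/
def rD (y : ℝ → ℝ) (t : ℝ) : ℝ := derivWithin y (Set.Ici t) t

/-- The sequence `(y k)` satisfies recurrence (R).  The condition on the initial function `y 0`
(continuous, piecewise linear with at most `N` points of non-differentiability, vanishing at `0`,
with non-decreasing right derivative taking values in `{q 1, ..., q N}`) is encoded through its
canonical representation: such functions are exactly those of the form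
`t ↦ ∑_{j=1}^N p j * (t - c j)₊` with `c` non-negative, non-decreasing and `c 1 = 0`. -/
def SatisfiesR (N : ℕ) (a p : ℕ → ℝ) (y : ℕ → ℝ → ℝ) : Prop :=
  (∃ c : ℕ → ℝ, c 1 = 0 ∧ (∀ j, 1 ≤ j → j ≤ N → 0 ≤ c j) ∧
      (∀ j, 1 ≤ j → j < N → c j ≤ c (j + 1)) ∧
      ∀ t : ℝ, 0 ≤ t → y 0 t = ∑ j ∈ Finset.Icc 1 N, p j * pos' (t - c j)) ∧
  ∀ k : ℕ, ∀ t : ℝ, 0 ≤ t →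
    y (k + 1) t = ∑ j ∈ Finset.Icc 1 N, p j * pos' (t - tinv (y k) (a j) + tinv (y k) (a 1))

/-- The breakpoints `c j` of the lower bounding trajectory `y₀⁻`:
`c 1 = 0` and `c j = d 1 / q 1 + ∑_{l=2}^j d l / q (l-1)` for `j ≥ 2`. -/
def cminus (a p : ℕ → ℝ) (j : ℕ) : ℝ :=
  if j ≤ 1 then 0
  else a 1 / qq p 1 + ∑ l ∈ Finset.Icc 2 j, (a l - a (l - 1)) / qq p (l - 1)

/-- The lower bounding initial trajectory `y₀⁻`. -/
def yminus0 (N : ℕ) (a p : ℕ → ℝ) : ℝ → ℝ :=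
  fun t => ∑ j ∈ Finset.Icc 1 N, p j * pos' (t - cminus a p j)

/-- The upper bounding initial trajectory `y₀⁺ : t ↦ q N * t`. -/
def yplus0 (N : ℕ) (p : ℕ → ℝ) : ℝ → ℝ := fun t => qq p N * t

/-- The sequence satisfying recurrence (R) with prescribed initial term `y0`. -/
def iterR (N : ℕ) (a p : ℕ → ℝ) (y0 : ℝ → ℝ) : ℕ → ℝ → ℝ
  | 0 => y0
  | k + 1 => fun t =>
      ∑ j ∈ Finset.Icc 1 N,
        p j * pos' (t - tinv (iterR N a p y0 k) (a j) + tinv (iterR N a p y0 k) (a 1))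

/-- `y` is a stationary trajectory: an increasing bijection of `[0,∞)` satisfying the
fixed-point equation of recurrence (R). -/
def IsStatTraj (N : ℕ) (a p : ℕ → ℝ) (y : ℝ → ℝ) : Prop :=
  StrictMonoOn y (Set.Ici 0) ∧ Set.BijOn y (Set.Ici 0) (Set.Ici 0) ∧
  ∀ t : ℝ, 0 ≤ t → y t = ∑ j ∈ Finset.Icc 1 N, p j * pos' (t - tinv y (a j) + tinv y (a 1))

/-- `E_N`: the set of pairs `(i, j)` with `1 ≤ i < j ≤ N`. -/
def ENfin (N : ℕ) : Finset (ℕ × ℕ) :=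
  (Finset.Icc 1 N ×ˢ Finset.Icc 1 N).filter fun e => e.1 < e.2

/-- `Nested e e'` means `e ≼_E e'`, i.e. `e` is nested in `e'`. -/
def Nested (e e' : ℕ × ℕ) : Prop := e'.1 ≤ e.1 ∧ e.1 < e.2 ∧ e.2 ≤ e'.2

/-- `E` is the edge set of a downward closed graph on `{1, ..., N}`. -/
def IsDCGraph (N : ℕ) (E : Finset (ℕ × ℕ)) : Prop :=
  E ⊆ ENfin N ∧ ∀ e ∈ E, ∀ e' : ℕ × ℕ, Nested e' e → e' ∈ E

/-- `bG E i` is the greatest `j > i` with `(i, j) ∈ E`, and `i` if there is no such `j`;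
by convention `bG E 0 = 1`. -/
def bG (E : Finset (ℕ × ℕ)) (i : ℕ) : ℕ :=
  if i = 0 then 1 else max i ((E.filter fun e => e.1 = i).sup fun e => e.2)

/-- `m(G)`: the maximal elements of `E` for `≼_E`. -/
def maxE (E : Finset (ℕ × ℕ)) : Finset (ℕ × ℕ) :=
  E.filter fun e => ∀ e' ∈ E, Nested e e' → e' = e

/-- `M(G)`: the minimal elements of `E_N \ E` for `≼_E`. -/
def minNE (N : ℕ) (E : Finset (ℕ × ℕ)) : Finset (ℕ × ℕ) :=
  (ENfin N \ E).filter fun e => ∀ e' ∈ ENfin N \ E, Nested e' e → e' = e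

/-- The map `T(G) : ℝ^N → ℝ^N`. -/
def TG (a p : ℕ → ℝ) (E : Finset (ℕ × ℕ)) (s : ℕ → ℝ) (i : ℕ) : ℝ :=
  (1 / qq p (bG E i)) * (a i + ∑ j ∈ Finset.Icc 1 (bG E i), p j * (s j - s 1))

/-- The product of `γ` over the consecutive pairs (edges) of a list of vertices. -/
def pathProd (γ : ℕ → ℕ → ℝ) (l : List ℕ) : ℝ := (List.zipWith γ l l.tail).prod

/-- `Γ i j`: the sum, over all directed paths from `i` to `j` using edges of `E`, of the
product of `γ` over the edges of the path.  Since all edges of a DC graph increase, a directed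
path from `i` to `j` is identified with the set `S ⊆ (i, j)` of its intermediate vertices,
subject to consecutive vertices being joined by edges of `E`. -/
def GammaPath (E : Finset (ℕ × ℕ)) (γ : ℕ → ℕ → ℝ) (i j : ℕ) : ℝ :=
  if i = j then 1
  else if i < j then
    ∑ S ∈ (Finset.Ioo i j).powerset,
      if List.Chain' (fun u v => (u, v) ∈ E) (Finset.sort (insert i (insert j S)) (· ≤ ·))
      then pathProd γ (Finset.sort (insert i (insert j S)) (· ≤ ·)) else 0
  else 0

/-- The edge weight `γ^G_{i,j}`. -/
def gammaG (p : ℕ → ℝ) (E : Finset (ℕ × ℕ)) (i j : ℕ) : ℝ :=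
  (qq p (bG E i) - qq p (max (j - 1) (bG E (i - 1)))) / qq p (bG E (i - 1))

/-- `Γ^G_{i,j}`. -/
def GammaG (p : ℕ → ℝ) (E : Finset (ℕ × ℕ)) (i j : ℕ) : ℝ := GammaPath E (gammaG p E) i j

/-- `z_1^G (a, p)`. -/
def z1G (N : ℕ) (a p : ℕ → ℝ) (E : Finset (ℕ × ℕ)) : ℝ :=
  (∑ j ∈ Finset.Icc 1 N, GammaG p E 1 j * dpar a j / qq p (bG E (j - 1))) /
  (1 + ∑ j ∈ Finset.Icc 1 N,
      GammaG p E 1 j * (qq p (bG E j) - qq p (bG E (j - 1))) / qq p (bG E (j - 1)))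

/-- `z_i^G (a, p)`. -/
def zG (N : ℕ) (a p : ℕ → ℝ) (E : Finset (ℕ × ℕ)) (i : ℕ) : ℝ :=
  if i = 1 then z1G N a p E
  else
    (∑ j ∈ Finset.Icc i N, GammaG p E i j * dpar a j / qq p (bG E (j - 1))) -
      z1G N a p E *
        ∑ j ∈ Finset.Icc i N,
          GammaG p E i j * (qq p (bG E j) - qq p (bG E (j - 1))) / qq p (bG E (j - 1))

/-- `Z^G_{i,j} (a, p) = z_{i+1}^G + ... + z_j^G`. -/
def ZG (N : ℕ) (a p : ℕ → ℝ) (E : Finset (ℕ × ℕ)) (i j : ℕ) : ℝ :=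
  ∑ l ∈ Finset.Icc (i + 1) j, zG N a p E l

/-- The DC graph `Gr(a, p)` read off from the stationary tuple `s = s(a, p)`: its edges are
the pairs `(i, j) ∈ E_N` with `s 1 > s j - s i`. -/
def GrEdges (N : ℕ) (s : ℕ → ℝ) : Finset (ℕ × ℕ) :=
  (ENfin N).filter fun e => s e.2 - s e.1 < s 1

/-- `ζ` solves the linear system `S^G (a, p)`. -/
def SolvesS (N : ℕ) (a p : ℕ → ℝ) (E : Finset (ℕ × ℕ)) (ζ : ℕ → ℝ) : Prop :=
  ∀ i, 1 ≤ i → i ≤ N →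
    a i = ∑ j ∈ Finset.Icc 1 (bG E i),
      p j * ((∑ l ∈ Finset.Icc 1 i, ζ l) - (∑ l ∈ Finset.Icc 1 j, ζ l) + ζ 1)

/-- `P^{2N}`, viewed as a (cylinder) subset of the space of pairs of real sequences; only the
coordinates `a 1, ..., a N, p 1, ..., p N` are constrained. -/
def Pset (N : ℕ) : Set ((ℕ → ℝ) × (ℕ → ℝ)) := {ap | IsParam N ap.1 ap.2}

/-- The region `P_G = {(a, p) ∈ P^{2N} : Gr(a, p) = G}`. -/
def PGset (N : ℕ) (E : Finset (ℕ × ℕ)) : Set ((ℕ → ℝ) × (ℕ → ℝ)) :=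
  {ap | IsParam N ap.1 ap.2 ∧ ∃ s : ℕ → ℝ, IsStationaryTuple N ap.1 ap.2 s ∧ GrEdges N s = E}

/-- The boundary of `P_G` relative to `P^{2N}`.  Since `P^{2N}` is open, the closure of `P_G`
relative to `P^{2N}` is `closure (PGset N E) ∩ Pset N` and its relative interior is
`interior (PGset N E)`. -/
def relBoundary (N : ℕ) (E : Finset (ℕ × ℕ)) : Set ((ℕ → ℝ) × (ℕ → ℝ)) :=
  (closure (PGset N E) ∩ Pset N) \ interior (PGset N E)

/-- The trajectory `y^{(m)}` built from a tuple `s`: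
`t ↦ ∑_{j=1}^N p j * (t - s j + s 1)₊`. -/
def trajOfS (N : ℕ) (p s : ℕ → ℝ) : ℝ → ℝ :=
  fun t => ∑ j ∈ Finset.Icc 1 N, p j * pos' (t - s j + s 1)

/-- The DC graph `G^{(m)}` associated with a tuple `s`: its edges are the `(i, j) ∈ E_N` with
`t^{(m)} (a i) - s j + s 1 > 0`, where `t^{(m)}` is the inverse of `trajOfS N p s`. -/
def GrFromS (N : ℕ) (a p s : ℕ → ℝ) : Finset (ℕ × ℕ) :=
  (ENfin N).filter fun e => 0 < tinv (trajOfS N p s) (a e.1) - s e.2 + s 1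


section StationaryTuple

variable {N : ℕ} {a p : ℕ → ℝ}

lemma apply_one_le_of_lt_succ {α : Type*} [Preorder α] {f : ℕ → α}
    (hf : ∀ i, 1 ≤ i → i < N → f i < f (i + 1)) {i : ℕ} (hi : 1 ≤ i) (hiN : i ≤ N) :
    f 1 ≤ f i := by
  induction i, hi using Nat.le_induction with
  | base => exact le_rfl
  | succ k hk ih => exact (ih (by omega)).trans (hf k hk (by omega)).le

lemma pos'_le_add {x y δ : ℝ} (hδ : 0 ≤ δ) (h : y ≤ x + δ) : pos' y ≤ pos' x + δ := by
  unfold pos'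
  exact max_le (by linarith [le_max_left x 0]) (by linarith [le_max_right x 0])

/-- The trajectory `x ↦ ∑ j, p j * (x - S j + S 1)₊` with its first term `p 1 * x₊` replaced by
`p 1 * x`: the two agree for `x ≥ 0`, and the linear term makes the reduced system
`IsReducedSol` solvable for every value of `S 1`. -/
def linTraj (N : ℕ) (p S : ℕ → ℝ) (x : ℝ) : ℝ :=
  p 1 * x + ∑ j ∈ Finset.Icc 2 N, p j * pos' (x - S j + S 1)

def IsReducedSol (N : ℕ) (a p S : ℕ → ℝ) : Prop :=
  ∀ i ∈ Finset.Icc 2 N, a i = linTraj N p S (S i)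

lemma linTraj_eq_sum (hN : 1 ≤ N) (S : ℕ → ℝ) {x : ℝ} (hx : 0 ≤ x) :
    linTraj N p S x = ∑ j ∈ Finset.Icc 1 N, p j * pos' (x - S j + S 1) := by
  have hIoc : Finset.Ioc 1 N = Finset.Icc 2 N := by ext; simp; omega
  rw [Finset.Icc_eq_cons_Ioc hN, Finset.sum_cons, hIoc, sub_add_cancel, pos', max_eq_left hx,
    linTraj]

lemma linTraj_of_le {S : ℕ → ℝ} {x : ℝ} (h : ∀ j ∈ Finset.Icc 2 N, x + S 1 ≤ S j) :
    linTraj N p S x = p 1 * x := by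
  rw [linTraj, Finset.sum_eq_zero fun j hj => by
    rw [pos', max_eq_right (by linarith [h j hj]), mul_zero], add_zero]

lemma linTraj_le_add (hp : ∀ j ∈ Finset.Icc 2 N, 0 ≤ p j) {S T : ℕ → ℝ} {x y δ : ℝ}
    (hδ : 0 ≤ δ) (h : ∀ j ∈ Finset.Icc 2 N, y - T j + T 1 ≤ x - S j + S 1 + δ) :
    linTraj N p T y ≤ linTraj N p S x + p 1 * (y - x) + (∑ j ∈ Finset.Icc 2 N, p j) * δ := by
  have hsum : ∑ j ∈ Finset.Icc 2 N, p j * pos' (y - T j + T 1) ≤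
      ∑ j ∈ Finset.Icc 2 N, (p j * pos' (x - S j + S 1) + p j * δ) :=
    Finset.sum_le_sum fun j hj => by
      rw [← mul_add]
      exact mul_le_mul_of_nonneg_left (pos'_le_add hδ (h j hj)) (hp j hj)
  rw [Finset.sum_add_distrib, ← Finset.sum_mul] at hsum
  unfold linTraj
  linarith

lemma linTraj_strictMono (hp1 : 0 < p 1) (hp : ∀ j ∈ Finset.Icc 2 N, 0 ≤ p j) (S : ℕ → ℝ) :
    StrictMono (linTraj N p S) := fun x y hxy => by
  have h := linTraj_le_add (S := S) (T := S) (x := y) (y := x) hp le_rfl fun j _ => by linarith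
  have : p 1 * (x - y) < 0 := mul_neg_of_pos_of_neg hp1 (sub_neg.2 hxy)
  linarith [mul_zero (∑ j ∈ Finset.Icc 2 N, p j)]

lemma IsReducedSol.mul_sub_le (hp1 : 0 ≤ p 1) (hp : ∀ j ∈ Finset.Icc 2 N, 0 ≤ p j)
    {S T : ℕ → ℝ} (hS : IsReducedSol N a p S) (hT : IsReducedSol N a p T)
    {i : ℕ} (hi : i ∈ Finset.Icc 2 N) :
    p 1 * (S i - T i) ≤ (∑ j ∈ Finset.Icc 2 N, p j) * max (T 1 - S 1) 0 := by
  obtain ⟨m, hm, hmax⟩ :=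
    Finset.exists_max_image (Finset.Icc 2 N) (fun j => S j - T j) ⟨i, hi⟩
  have key := linTraj_le_add (S := S) (T := T) (x := S m) (y := T m) hp (le_max_right _ _)
    fun j hj => by linarith [hmax j hj, le_max_left (T 1 - S 1) 0]
  rw [← hS m hm, ← hT m hm] at key
  calc p 1 * (S i - T i) ≤ p 1 * (S m - T m) := mul_le_mul_of_nonneg_left (hmax i hi) hp1
    _ ≤ _ := by linarith

lemma IsReducedSol.nonneg (hp1 : 0 < p 1) (ha : ∀ i ∈ Finset.Icc 2 N, 0 < a i) {S : ℕ → ℝ}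
    (hS : IsReducedSol N a p S) (h1 : S 1 = 0) : ∀ j ∈ Finset.Icc 2 N, 0 ≤ S j := by
  intro j hj
  obtain ⟨m, hm, hmin⟩ := Finset.exists_min_image (Finset.Icc 2 N) S ⟨j, hj⟩
  have ham : a m = p 1 * S m := by
    rw [hS m hm, linTraj_of_le fun k hk => by linarith [hmin k hk]]
  have : 0 < p 1 * S m := ham ▸ ha m hm
  exact (pos_of_mul_pos_right this hp1.le).le.trans (hmin j hj)

/-- Knaster–Tarski: since `K = p 1 + ∑ j ∈ Icc 2 N, p j` bounds the slopes of `linTraj`, the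
relaxation step `S i ↦ S i + (a i - linTraj N p S (S i)) / K` is monotone and maps the box
`[v, w]` to itself, and its fixed points are the solutions. -/
lemma exists_isReducedSol_mem_Icc (hp1 : 0 < p 1) (hp : ∀ j ∈ Finset.Icc 2 N, 0 ≤ p j)
    {v w : ℕ → ℝ} (hvw : v ≤ w) (h1 : v 1 = w 1)
    (hv : ∀ i ∈ Finset.Icc 2 N, linTraj N p v (v i) ≤ a i)
    (hw : ∀ i ∈ Finset.Icc 2 N, a i ≤ linTraj N p w (w i)) :
    ∃ S ∈ Set.Icc v w, IsReducedSol N a p S := by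
  set K := p 1 + ∑ j ∈ Finset.Icc 2 N, p j
  have hK : 0 < K := add_pos_of_pos_of_nonneg hp1 (Finset.sum_nonneg hp)
  let Φ : (ℕ → ℝ) → ℕ → ℝ := fun S i =>
    if i ∈ Finset.Icc 2 N then S i + (a i - linTraj N p S (S i)) / K else S i
  have hΦ : ∀ S T, S ≤ T → S 1 = T 1 → Φ S ≤ Φ T := by
    intro S T hST hST1 i
    simp only [Φ]
    split_ifs with hi
    · have key := linTraj_le_add (S := S) (T := T) (x := S i) (y := T i) hp
        (sub_nonneg.2 (hST i)) fun j _ => by linarith [hST j]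
      have : (a i - linTraj N p S (S i)) / K - (a i - linTraj N p T (T i)) / K ≤ T i - S i := by
        rw [← sub_div, div_le_iff₀ hK]
        linarith
      linarith
    · exact hST i
  have hvΦ : v ≤ Φ v := fun i => by
    simp only [Φ]
    split_ifs with hi
    · exact le_add_of_nonneg_right (div_nonneg (sub_nonneg.2 (hv i hi)) hK.le)
    · exact le_rfl
  have hΦw : Φ w ≤ w := fun i => by
    simp only [Φ]
    split_ifs with hi
    · exact add_le_of_nonpos_right (div_nonpos_of_nonpos_of_nonneg (sub_nonpos.2 (hw i hi)) hK.le)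
    · exact le_rfl
  have hbox1 : ∀ S ∈ Set.Icc v w, S 1 = v 1 := fun S hS => le_antisymm (h1 ▸ hS.2 1) (hS.1 1)
  have hbox : ∀ S ∈ Set.Icc v w, Φ S ∈ Set.Icc v w := fun S hS =>
    ⟨hvΦ.trans (hΦ v S hS.1 (hbox1 S hS).symm), (hΦ S w hS.2 ((hbox1 S hS).trans h1)).trans hΦw⟩
  have : Fact (v ≤ w) := ⟨hvw⟩
  let Ψ : Set.Icc v w →o Set.Icc v w :=
    ⟨fun S => ⟨Φ S, hbox S S.2⟩, fun S T hST => hΦ S T hST ((hbox1 S S.2).trans (hbox1 T T.2).symm)⟩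
  have hfix : Φ Ψ.lfp = Ψ.lfp := congrArg Subtype.val Ψ.map_lfp
  refine ⟨Ψ.lfp, Ψ.lfp.2, fun i hi => ?_⟩
  have hfixi := congrFun hfix i
  simp only [Φ, if_pos hi, add_eq_left, div_eq_zero_iff, hK.ne', or_false, sub_eq_zero] at hfixi
  exact hfixi

lemma exists_isReducedSol (hp1 : 0 < p 1) (hp : ∀ j ∈ Finset.Icc 2 N, 0 ≤ p j) (σ : ℝ) :
    ∃ S : ℕ → ℝ, S 1 = σ ∧ IsReducedSol N a p S := by
  set R := ∑ j ∈ Finset.Icc 2 N, p j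
  set A := ∑ i ∈ Finset.Icc 2 N, |a i|
  have hA : ∀ i ∈ Finset.Icc 2 N, |a i| ≤ A := fun i hi =>
    Finset.single_le_sum (fun j _ => abs_nonneg (a j)) hi
  have hA0 : 0 ≤ A := Finset.sum_nonneg fun i _ => abs_nonneg (a i)
  have hR : 0 ≤ R * pos' σ := mul_nonneg (Finset.sum_nonneg hp) (le_max_right σ 0)
  let box : ℝ → ℕ → ℝ := fun c i => if i = 1 then σ else c
  have hbox : ∀ c, ∀ i ∈ Finset.Icc 2 N, linTraj N p (box c) (box c i) = p 1 * c + R * pos' σ := by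
    intro c i hi
    have hne : ∀ j ∈ Finset.Icc 2 N, box c j = c := fun j hj =>
      if_neg (by simp only [Finset.mem_Icc] at hj; omega)
    rw [linTraj, hne i hi, Finset.sum_mul]
    congr 1
    refine Finset.sum_congr rfl fun j hj => ?_
    rw [hne j hj, sub_self, zero_add]
    rfl
  obtain ⟨S, hS, hsol⟩ := exists_isReducedSol_mem_Icc (a := a) (v := box (-(A + R * pos' σ) / p 1))
    (w := box (A / p 1)) hp1 hp
    (fun i => by
      simp only [box]
      split_ifs
      · exact le_rfl
      · exact div_le_div_of_nonneg_right (by linarith) hp1.le)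
    rfl
    (fun i hi => by
      rw [hbox _ i hi, mul_div_cancel₀ _ hp1.ne']
      linarith [neg_abs_le (a i), hA i hi])
    (fun i hi => by
      rw [hbox _ i hi, mul_div_cancel₀ _ hp1.ne']
      linarith [le_abs_self (a i), hA i hi])
  exact ⟨S, le_antisymm (hS.2 1) (hS.1 1), hsol⟩

lemma continuous_of_isReducedSol (hp1 : 0 < p 1) (hp : ∀ j ∈ Finset.Icc 2 N, 0 ≤ p j)
    {S : ℝ → ℕ → ℝ} (hS1 : ∀ σ, S σ 1 = σ) (hS : ∀ σ, IsReducedSol N a p (S σ))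
    {j : ℕ} (hj : j ∈ Finset.Icc 2 N) : Continuous fun σ => S σ j := by
  set R := ∑ j ∈ Finset.Icc 2 N, p j
  refine (LipschitzWith.of_le_add_mul' (R / p 1) fun σ τ => ?_).continuous
  have h := (hS σ).mul_sub_le hp1.le hp (hS τ) hj
  rw [hS1, hS1] at h
  have hdist : max (τ - σ) 0 ≤ dist σ τ :=
    max_le (by rw [Real.dist_eq]; linarith [neg_abs_le (σ - τ)]) dist_nonneg
  have : S σ j - S τ j ≤ R / p 1 * dist σ τ := by
    rw [div_mul_eq_mul_div, le_div_iff₀ hp1]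
    nlinarith [mul_le_mul_of_nonneg_left hdist (Finset.sum_nonneg hp)]
  linarith

lemma exists_linTraj_eq_of_isReducedSol (hp1 : 0 < p 1) (hp : ∀ j ∈ Finset.Icc 2 N, 0 ≤ p j)
    (ha1 : 0 ≤ a 1) (ha : ∀ i ∈ Finset.Icc 2 N, 0 < a i)
    {S : ℝ → ℕ → ℝ} (hS1 : ∀ σ, S σ 1 = σ) (hS : ∀ σ, IsReducedSol N a p (S σ)) :
    ∃ σ, a 1 = linTraj N p (S σ) σ := by
  have hg : Continuous fun σ => linTraj N p (S σ) σ := by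
    simp only [linTraj, hS1, pos']
    exact (continuous_const.mul continuous_id).add (continuous_finsetSum _ fun j hj =>
      continuous_const.mul (((continuous_id.sub
        (continuous_of_isReducedSol hp1 hp hS1 hS hj)).add continuous_id).max continuous_const))
  have hlo : linTraj N p (S 0) 0 ≤ a 1 := by
    rw [linTraj_of_le fun j hj => by
      rw [hS1, add_zero]; exact (hS 0).nonneg hp1 ha (hS1 0) j hj, mul_zero]
    exact ha1
  have hhi : a 1 ≤ linTraj N p (S (a 1 / p 1)) (a 1 / p 1) := by
    rw [linTraj, mul_div_cancel₀ _ hp1.ne']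
    exact le_add_of_nonneg_right
      (Finset.sum_nonneg fun j hj => mul_nonneg (hp j hj) (le_max_right _ _))
  obtain ⟨σ, -, hσ⟩ := intermediate_value_Icc (div_nonneg ha1 hp1.le) hg.continuousOn ⟨hlo, hhi⟩
  exact ⟨σ, hσ.symm⟩

lemma IsReducedSol.linTraj_lt (hp1 : 0 < p 1) (hp : ∀ j ∈ Finset.Icc 2 N, 0 ≤ p j)
    {S T : ℕ → ℝ} (hS : IsReducedSol N a p S) (hT : IsReducedSol N a p T) (h : S 1 < T 1) :
    linTraj N p S (S 1) < linTraj N p T (T 1) := by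
  have hle : ∀ j ∈ Finset.Icc 2 N, T j ≤ S j := fun j hj => by
    have := hT.mul_sub_le hp1.le hp hS hj
    rw [max_eq_right (by linarith), mul_zero] at this
    nlinarith
  have key := linTraj_le_add (S := T) (T := S) (x := T 1) (y := S 1) hp le_rfl
    fun j hj => by linarith [hle j hj]
  have : p 1 * (S 1 - T 1) < 0 := mul_neg_of_pos_of_neg hp1 (sub_neg.2 h)
  linarith [mul_zero (∑ j ∈ Finset.Icc 2 N, p j)]

lemma IsReducedSol.eq_of_linTraj_eq (hp1 : 0 < p 1) (hp : ∀ j ∈ Finset.Icc 2 N, 0 ≤ p j)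
    {S T : ℕ → ℝ} (hS : IsReducedSol N a p S) (hT : IsReducedSol N a p T)
    (h : linTraj N p S (S 1) = linTraj N p T (T 1)) : ∀ i, 1 ≤ i → i ≤ N → S i = T i := by
  have h1 : S 1 = T 1 := by
    rcases lt_trichotomy (S 1) (T 1) with hlt | heq | hgt
    · exact absurd h (hS.linTraj_lt hp1 hp hT hlt).ne
    · exact heq
    · exact absurd h (hT.linTraj_lt hp1 hp hS hgt).ne'
  intro i hi1 hiN
  rcases hi1.eq_or_lt with rfl | hi2
  · exact h1
  · have hi : i ∈ Finset.Icc 2 N := Finset.mem_Icc.2 ⟨hi2, hiN⟩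
    have hST := hS.mul_sub_le hp1.le hp hT hi
    have hTS := hT.mul_sub_le hp1.le hp hS hi
    rw [h1, sub_self, max_self, mul_zero] at hST hTS
    nlinarith

lemma isStationaryTuple_iff (hN : 1 ≤ N) (hp1 : 0 < p 1) (hp : ∀ j ∈ Finset.Icc 2 N, 0 ≤ p j)
    (ha1 : 0 < a 1) (ha : ∀ i, 1 ≤ i → i < N → a i < a (i + 1)) {s : ℕ → ℝ} :
    IsStationaryTuple N a p s ↔ a 1 = linTraj N p s (s 1) ∧ IsReducedSol N a p s := by
  constructor
  · rintro ⟨hs1, hs, heq⟩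
    have h : ∀ i, 1 ≤ i → i ≤ N → a i = linTraj N p s (s i) := fun i hi1 hiN => by
      rw [linTraj_eq_sum hN s (hs1.le.trans (apply_one_le_of_lt_succ hs hi1 hiN))]
      exact heq i hi1 hiN
    exact ⟨h 1 le_rfl hN, fun i hi => h i (by linarith [(Finset.mem_Icc.1 hi).1])
      (Finset.mem_Icc.1 hi).2⟩
  · rintro ⟨h1, hs⟩
    have heq : ∀ i, 1 ≤ i → i ≤ N → a i = linTraj N p s (s i) := fun i hi1 hiN => by
      rcases hi1.eq_or_lt with rfl | hi2
      · exact h1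
      · exact hs i (Finset.mem_Icc.2 ⟨hi2, hiN⟩)
    have hmono : ∀ i, 1 ≤ i → i < N → s i < s (i + 1) := fun i hi1 hiN =>
      (linTraj_strictMono hp1 hp s).lt_iff_lt.1 <| by
        rw [← heq i hi1 hiN.le, ← heq (i + 1) (by omega) hiN]
        exact ha i hi1 hiN
    have hs1 : 0 < s 1 := by
      by_contra! hs1
      have : a 1 = p 1 * s 1 := h1.trans <| linTraj_of_le fun j hj => by
        linarith [apply_one_le_of_lt_succ hmono (by linarith [(Finset.mem_Icc.1 hj).1] : 1 ≤ j)
          (Finset.mem_Icc.1 hj).2]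
      nlinarith
    refine ⟨hs1, hmono, fun i hi1 hiN => ?_⟩
    rw [heq i hi1 hiN, linTraj_eq_sum hN s (hs1.le.trans (apply_one_le_of_lt_succ hmono hi1 hiN))]

end StationaryTuple

end

/-- For every `N ≥ 1` and every `(a, p) ∈ P^{2N}` there exists exactly one
stationary tuple `(s 1, ..., s N)` for `(a, p)`. -/
theorem stmt_0 (N : ℕ) (hN : 1 ≤ N) (a p : ℕ → ℝ) (hap : IsParam N a p) :
    (∃ s : ℕ → ℝ, IsStationaryTuple N a p s) ∧
    ∀ s s' : ℕ → ℝ, IsStationaryTuple N a p s → IsStationaryTuple N a p s' →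
      ∀ i, 1 ≤ i → i ≤ N → s i = s' i := by
  obtain ⟨ha1, ha, hp⟩ := hap
  have hp1 : 0 < p 1 := hp 1 le_rfl hN
  have hp2 : ∀ j ∈ Finset.Icc 2 N, 0 ≤ p j := fun j hj =>
    (hp j (by linarith [(Finset.mem_Icc.1 hj).1]) (Finset.mem_Icc.1 hj).2).le
  have hstat := fun s => isStationaryTuple_iff (s := s) hN hp1 hp2 ha1 ha
  refine ⟨?_, fun s s' hs hs' => ?_⟩
  · choose S hS1 hS using exists_isReducedSol (a := a) hp1 hp2
    have ha2 : ∀ i ∈ Finset.Icc 2 N, 0 < a i := fun i hi =>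
      ha1.trans_le (apply_one_le_of_lt_succ ha (by linarith [(Finset.mem_Icc.1 hi).1])
        (Finset.mem_Icc.1 hi).2)
    obtain ⟨σ, hσ⟩ := exists_linTraj_eq_of_isReducedSol hp1 hp2 ha1.le ha2 hS1 hS
    exact ⟨S σ, (hstat _).2 ⟨by rwa [hS1], hS σ⟩⟩
  · rw [hstat] at hs hs'
    exact hs.2.eq_of_linTraj_eq hp1 hp2 hs'.2 (hs.1.symm.trans hs'.1)
end

section
/- Let (a,p) ∈ P^{2N} and let (y_k)_{k≥0} satisfy recurrence (R), where in addition the initial function y_0 satisfies: for every i ∈ {1,...,N} and every t ≥ 0 with y_0(t) ≥ a_i, the right derivative of y_0 at t is at least q_i. Let s be the unique stationary tuple for (a,p) and set ỹ_∞(t) := Σ_{j=1}^N p_j·(t − s_j + s_1)_+. Then there exists a constant κ > 0, depending only on (a,p), such that for every such sequence (y_k) and every k ≥ 0, sup_{t≥0} |y_k(t) − ỹ_∞(t)| ≤ κ·(1 − q_1/q_N)^k, where 1 − q_1/q_N ∈ [0,1). -/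
open Filter Topology
open scoped Classical

/-!
Every `y k` is a *fan* `t ↦ ∑ j, p j (t - b j)₊` with `b 1 = 0`, and so is the stationary
trajectory, with breakpoints `s j - s 1`; one step of (R) replaces the breakpoints by the hitting
times `t_k (a j) - t_k (a 1)`. The key estimate compares hitting times of two fans: if
`b ≤ b' + M` then the hitting times satisfy `t ≤ t' + λ M` with `λ = 1 - q 1 / q N`, because the
first summand of a fan has slope `p 1` from time `0` on while the whole fan has slope at most
`q N`. Hence the oscillation of `b - (s - s 1)` contracts by the factor `λ` at each step, and it
controls `sup |y k - ỹ_∞|` up to the factor `q N`. The hypothesis on the right derivative of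
`y 0` bounds its breakpoints by `a N / p 1`, so that the initial oscillation only depends on
`(a, p)`.
-/

namespace RecurrenceR

open Finset

lemma pos'_nonneg (x : ℝ) : 0 ≤ pos' x := le_max_right _ _

lemma pos'_of_nonneg {x : ℝ} (h : 0 ≤ x) : pos' x = x := max_eq_left h

lemma pos'_of_nonpos {x : ℝ} (h : x ≤ 0) : pos' x = 0 := max_eq_right h

lemma pos'_mono : Monotone pos' := fun _ _ h => max_le_max h le_rfl

lemma abs_pos'_sub_pos'_le (x y : ℝ) : |pos' x - pos' y| ≤ |x - y| :=
  abs_max_sub_max_le_abs x y 0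

lemma pos'_sub_pos'_le {x y : ℝ} (h : y ≤ x) : pos' x - pos' y ≤ x - y := by
  have := (abs_le.1 (abs_pos'_sub_pos'_le x y)).2
  rwa [abs_of_nonneg (sub_nonneg.2 h)] at this

lemma hasDerivWithinAt_pos'_sub (β t : ℝ) :
    HasDerivWithinAt (fun x => pos' (x - β)) (if β ≤ t then 1 else 0) (Set.Ici t) t := by
  split_ifs with h
  · exact ((hasDerivAt_id t).sub_const β).hasDerivWithinAt.congr
      (fun x hx => pos'_of_nonneg (by simp only [Set.mem_Ici] at hx; linarith))
      (pos'_of_nonneg (by linarith))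
  · refine ((hasDerivAt_const t 0).congr_of_eventuallyEq ?_).hasDerivWithinAt
    filter_upwards [Iio_mem_nhds (not_le.1 h)] with x hx
    exact pos'_of_nonpos (by simp only [Set.mem_Iio] at hx; linarith)

lemma qq_one (p : ℕ → ℝ) : qq p 1 = p 1 := by simp [qq]

lemma qq_succ (p : ℕ → ℝ) (n : ℕ) : qq p (n + 1) = qq p n + p (n + 1) := by
  rw [qq, qq, sum_Icc_succ_top (by omega)]

lemma monotoneOn_Icc_of_le_succ {N : ℕ} {f : ℕ → ℝ}
    (h : ∀ i, 1 ≤ i → i < N → f i ≤ f (i + 1)) : MonotoneOn f (Icc 1 N) := by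
  rw [coe_Icc]
  refine monotoneOn_of_le_succ Set.ordConnected_Icc fun i _ hi hi' => ?_
  rw [Order.succ_eq_add_one] at hi' ⊢
  exact h i hi.1 (by simp only [Set.mem_Icc] at hi'; omega)

lemma apply_mem_Icc_of_le_succ {N : ℕ} {f : ℕ → ℝ}
    (h : ∀ i, 1 ≤ i → i < N → f i ≤ f (i + 1)) {j : ℕ} (hj : j ∈ Icc 1 N) :
    f j ∈ Set.Icc (f 1) (f N) := by
  obtain ⟨h1j, hjN⟩ := mem_Icc.1 hj
  exact ⟨monotoneOn_Icc_of_le_succ h (left_mem_Icc.2 (h1j.trans hjN)) hj h1j,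
    monotoneOn_Icc_of_le_succ h hj (right_mem_Icc.2 (h1j.trans hjN)) hjN⟩

noncomputable def fan (N : ℕ) (p b : ℕ → ℝ) (t : ℝ) : ℝ :=
  ∑ j ∈ Icc 1 N, p j * pos' (t - b j)

section Fan

variable {N : ℕ} {p b b' : ℕ → ℝ}

lemma qq_eq_add (hN : 1 ≤ N) : qq p N = p 1 + ∑ j ∈ Ioc 1 N, p j :=
  (add_sum_Ioc_eq_sum_Icc hN).symm

lemma qq_pos (hN : 1 ≤ N) (hp : ∀ j ∈ Icc 1 N, 0 ≤ p j) (hp1 : 0 < p 1) : 0 < qq p N :=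
  hp1.trans_le (single_le_sum hp (left_mem_Icc.2 hN))

lemma one_sub_div_qq_nonneg (hN : 1 ≤ N) (hp : ∀ j ∈ Icc 1 N, 0 ≤ p j) (hp1 : 0 < p 1) :
    0 ≤ 1 - p 1 / qq p N := by
  rw [sub_nonneg, div_le_one (qq_pos hN hp hp1), qq]
  exact single_le_sum hp (left_mem_Icc.2 hN)

lemma fan_sub_first (σ : ℕ → ℝ) (t : ℝ) :
    fan N p (fun j => σ j - σ 1) t = ∑ j ∈ Icc 1 N, p j * pos' (t - σ j + σ 1) := by
  refine sum_congr rfl fun j _ => ?_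
  rw [sub_sub_eq_add_sub, sub_add_eq_add_sub]

lemma continuous_fan : Continuous (fan N p b) := by
  unfold fan pos'
  fun_prop

lemma fan_zero (hb : ∀ j ∈ Icc 1 N, 0 ≤ b j) : fan N p b 0 = 0 :=
  sum_eq_zero fun j hj => by rw [pos'_of_nonpos (by linarith [hb j hj]), mul_zero]

lemma fan_eq_add (hN : 1 ≤ N) (hb1 : b 1 = 0) {t : ℝ} (ht : 0 ≤ t) :
    fan N p b t = p 1 * t + ∑ j ∈ Ioc 1 N, p j * pos' (t - b j) := by
  rw [fan, ← add_sum_Ioc_eq_sum_Icc hN, hb1, sub_zero, pos'_of_nonneg ht]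

lemma mul_le_fan (hN : 1 ≤ N) (hp : ∀ j ∈ Icc 1 N, 0 ≤ p j) (hb1 : b 1 = 0) {t : ℝ}
    (ht : 0 ≤ t) : p 1 * t ≤ fan N p b t := by
  rw [fan_eq_add hN hb1 ht]
  exact le_add_of_nonneg_right <| sum_nonneg fun j hj =>
    mul_nonneg (hp j (Ioc_subset_Icc_self hj)) (pos'_nonneg _)

lemma mul_le_fan_sub_fan (hN : 1 ≤ N) (hp : ∀ j ∈ Icc 1 N, 0 ≤ p j) (hb1 : b 1 = 0)
    {t t' : ℝ} (ht' : 0 ≤ t') (h : t' ≤ t) :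
    p 1 * (t - t') ≤ fan N p b t - fan N p b t' := by
  rw [fan_eq_add hN hb1 (ht'.trans h), fan_eq_add hN hb1 ht']
  have : ∑ j ∈ Ioc 1 N, p j * pos' (t' - b j) ≤ ∑ j ∈ Ioc 1 N, p j * pos' (t - b j) :=
    sum_le_sum fun j hj => mul_le_mul_of_nonneg_left (pos'_mono (by linarith))
      (hp j (Ioc_subset_Icc_self hj))
  linarith

lemma strictMonoOn_fan (hN : 1 ≤ N) (hp : ∀ j ∈ Icc 1 N, 0 ≤ p j) (hp1 : 0 < p 1)
    (hb1 : b 1 = 0) : StrictMonoOn (fan N p b) (Set.Ici 0) := fun t' ht' t _ h => by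
  have := mul_le_fan_sub_fan hN hp hb1 ht' h.le
  nlinarith

lemma surjOn_fan (hN : 1 ≤ N) (hp : ∀ j ∈ Icc 1 N, 0 ≤ p j) (hp1 : 0 < p 1) (hb1 : b 1 = 0)
    (hb : ∀ j ∈ Icc 1 N, 0 ≤ b j) : Set.SurjOn (fan N p b) (Set.Ici 0) (Set.Ici 0) := by
  intro x (hx : 0 ≤ x)
  have h0 : 0 ≤ x / p 1 := by positivity
  have hx' : x ≤ fan N p b (x / p 1) := by
    simpa [mul_div_cancel₀ _ hp1.ne'] using mul_le_fan hN hp hb1 h0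
  obtain ⟨t, ht, rfl⟩ := intermediate_value_Icc h0 continuous_fan.continuousOn
    ⟨(fan_zero hb).trans_le hx, hx'⟩
  exact ⟨t, ht.1, rfl⟩

lemma tinv_of_eqOn_fan (hN : 1 ≤ N) (hp : ∀ j ∈ Icc 1 N, 0 ≤ p j) (hp1 : 0 < p 1)
    (hb1 : b 1 = 0) (hb : ∀ j ∈ Icc 1 N, 0 ≤ b j) {y : ℝ → ℝ}
    (hy : Set.EqOn y (fan N p b) (Set.Ici 0)) {x : ℝ} (hx : 0 ≤ x) :
    0 ≤ tinv y x ∧ fan N p b (tinv y x) = x := by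
  obtain ⟨t, ht, rfl⟩ := surjOn_fan hN hp hp1 hb1 hb hx
  have hex : ∃ t' ∈ Set.Ici 0, y t' = fan N p b t := ⟨t, ht, hy ht⟩
  have hmem : tinv y (fan N p b t) ∈ Set.Ici 0 := Function.invFunOn_mem hex
  exact ⟨hmem, (hy hmem).symm.trans (Function.invFunOn_eq hex)⟩

lemma abs_fan_sub_fan_le (hp : ∀ j ∈ Icc 1 N, 0 ≤ p j) (t : ℝ) :
    |fan N p b t - fan N p b' t| ≤ ∑ j ∈ Icc 1 N, p j * |b j - b' j| := by
  rw [fan, fan, ← sum_sub_distrib]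
  refine (abs_sum_le_sum_abs _ _).trans (sum_le_sum fun j hj => ?_)
  rw [← mul_sub, abs_mul, abs_of_nonneg (hp j hj)]
  refine mul_le_mul_of_nonneg_left ((abs_pos'_sub_pos'_le _ _).trans_eq ?_) (hp j hj)
  rw [sub_sub_sub_cancel_left, abs_sub_comm]

lemma hasDerivWithinAt_fan (b : ℕ → ℝ) (t : ℝ) :
    HasDerivWithinAt (fan N p b) (∑ j ∈ Icc 1 N with b j ≤ t, p j) (Set.Ici t) t := by
  have := HasDerivWithinAt.fun_sum (u := Icc 1 N) fun j _ =>
    (hasDerivWithinAt_pos'_sub (b j) t).const_mul (p j)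
  simp only [mul_ite, mul_one, mul_zero] at this
  rwa [sum_filter]

lemma rD_of_eqOn_fan {y : ℝ → ℝ} (hy : Set.EqOn y (fan N p b) (Set.Ici 0)) {t : ℝ}
    (ht : 0 ≤ t) : rD y t = ∑ j ∈ Icc 1 N with b j ≤ t, p j :=
  ((hasDerivWithinAt_fan b t).congr (fun _ hx => hy (ht.trans hx)) (hy ht)).derivWithin
    (uniqueDiffWithinAt_Ici t)

lemma le_div_of_le_rD (hN : 1 ≤ N) (hp : ∀ j ∈ Icc 1 N, 0 ≤ p j) (hp1 : 0 < p 1)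
    (hb1 : b 1 = 0) (hb : MonotoneOn b (Icc 1 N)) {y : ℝ → ℝ}
    (hy : Set.EqOn y (fan N p b) (Set.Ici 0)) {j : ℕ} (hj : j ∈ Icc 1 N) (hpj : 0 < p j)
    {α : ℝ} (hα : 0 ≤ α) (hrD : ∀ t, 0 ≤ t → α ≤ y t → qq p j ≤ rD y t) :
    b j ≤ α / p 1 := by
  by_contra! hbj
  obtain ⟨t, hαt, htb⟩ := exists_between hbj
  have ht0 : 0 ≤ t := (div_nonneg hα hp1.le).trans hαt.le
  replace hαt : α ≤ y t := by
    rw [hy ht0]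
    calc α = p 1 * (α / p 1) := (mul_div_cancel₀ _ hp1.ne').symm
      _ ≤ p 1 * t := by gcongr
      _ ≤ fan N p b t := mul_le_fan hN hp hb1 ht0
  obtain ⟨n, rfl⟩ : ∃ n, j = n + 1 := ⟨j - 1, by rw [mem_Icc] at hj; omega⟩
  have hsub : {l ∈ Icc 1 N | b l ≤ t} ⊆ Icc 1 n := by
    intro l hl
    rw [mem_filter] at hl
    refine mem_Icc.2 ⟨(mem_Icc.1 hl.1).1, ?_⟩
    by_contra! hnl
    have := hb (mem_coe.2 hj) (mem_coe.2 hl.1) hnl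
    linarith
  have hbelow : ∑ l ∈ Icc 1 N with b l ≤ t, p l ≤ qq p n :=
    sum_le_sum_of_subset_of_nonneg hsub fun l hl _ =>
      hp l (mem_Icc.2 ⟨(mem_Icc.1 hl).1, by rw [mem_Icc] at hl hj; omega⟩)
  have := hrD t ht0 hαt
  rw [rD_of_eqOn_fan hy ht0, qq_succ] at this
  linarith

theorem le_add_of_fan_eq_fan (hN : 1 ≤ N) (hp : ∀ j ∈ Icc 1 N, 0 ≤ p j) (hp1 : 0 < p 1)
    (hb1 : b 1 = 0) (hb'1 : b' 1 = 0) {M t t' : ℝ} (hM : 0 ≤ M)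
    (hle : ∀ j ∈ Icc 1 N, b j ≤ b' j + M) (ht : 0 ≤ t) (ht' : 0 ≤ t')
    (heq : fan N p b t = fan N p b' t') : t ≤ t' + (1 - p 1 / qq p N) * M := by
  have hq := qq_pos hN hp hp1
  have hrate := one_sub_div_qq_nonneg hN hp hp1
  set z := t' + (1 - p 1 / qq p N) * M
  set δ := p 1 / qq p N * M
  have hz : 0 ≤ z := by positivity
  have hδ : 0 ≤ δ := by positivity
  refine ((strictMonoOn_fan hN hp hp1 hb1).le_iff_le ht hz).1 ?_
  rw [heq, fan_eq_add hN hb1 hz, fan_eq_add hN hb'1 ht']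
  -- Every later summand loses at most `p j * δ`; the first one gains exactly the total loss.
  have hlater : ∑ j ∈ Ioc 1 N, p j * pos' (t' - b' j) - (qq p N - p 1) * δ ≤
      ∑ j ∈ Ioc 1 N, p j * pos' (z - b j) := by
    rw [qq_eq_add hN, add_sub_cancel_left, sum_mul, ← sum_sub_distrib]
    refine sum_le_sum fun j hj => ?_
    have hzj : t' - b' j - δ ≤ z - b j := by
      have := hle j (Ioc_subset_Icc_self hj)
      simp only [z, δ]
      linarith
    have hloss := pos'_sub_pos'_le (x := t' - b' j) (y := t' - b' j - δ) (by linarith)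
    rw [← mul_sub]
    exact mul_le_mul_of_nonneg_left (by linarith [pos'_mono hzj])
      (hp j (Ioc_subset_Icc_self hj))
  have hgain : p 1 * (z - t') = (qq p N - p 1) * δ := by
    simp only [z, δ]
    field_simp
    ring
  linarith

lemma sub_mem_Icc_of_fan_eq_fan (hN : 1 ≤ N) (hp : ∀ j ∈ Icc 1 N, 0 ≤ p j) (hp1 : 0 < p 1)
    (hb1 : b 1 = 0) (hb'1 : b' 1 = 0) {c w : ℝ}
    (hbb' : ∀ j ∈ Icc 1 N, b j - b' j ∈ Set.Icc c (c + w)) {t t' : ℝ} (ht : 0 ≤ t)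
    (ht' : 0 ≤ t') (heq : fan N p b t = fan N p b' t') :
    t - t' ∈ Set.Icc ((1 - p 1 / qq p N) * c)
      ((1 - p 1 / qq p N) * c + (1 - p 1 / qq p N) * w) := by
  have h1 := hbb' 1 (left_mem_Icc.2 hN)
  rw [hb1, hb'1, sub_zero, Set.mem_Icc] at h1
  have hup := le_add_of_fan_eq_fan hN hp hp1 hb1 hb'1 (M := c + w) (by linarith)
    (fun j hj => by linarith [(hbb' j hj).2]) ht ht' heq
  have hdown := le_add_of_fan_eq_fan hN hp hp1 hb'1 hb1 (M := -c) (by linarith)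
    (fun j hj => by linarith [(hbb' j hj).1]) ht' ht heq.symm
  constructor <;> nlinarith

end Fan

def IsFanNear (N : ℕ) (p bstar : ℕ → ℝ) (w : ℝ) (f : ℝ → ℝ) : Prop :=
  ∃ b : ℕ → ℝ, b 1 = 0 ∧ (∀ j ∈ Icc 1 N, 0 ≤ b j) ∧ Set.EqOn f (fan N p b) (Set.Ici 0) ∧
    ∃ c, ∀ j ∈ Icc 1 N, b j - bstar j ∈ Set.Icc c (c + w)

namespace IsFanNear

variable {N : ℕ} {p bstar : ℕ → ℝ} {w : ℝ} {f : ℝ → ℝ}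

lemma abs_sub_fan_le (hN : 1 ≤ N) (hp : ∀ j ∈ Icc 1 N, 0 ≤ p j) (hbstar : bstar 1 = 0)
    (hf : IsFanNear N p bstar w f) {t : ℝ} (ht : 0 ≤ t) :
    |f t - fan N p bstar t| ≤ qq p N * w := by
  obtain ⟨b, hb1, -, hfb, c, hc⟩ := hf
  have h1 := hc 1 (left_mem_Icc.2 hN)
  rw [hb1, hbstar, sub_zero, Set.mem_Icc] at h1
  rw [hfb ht, qq, sum_mul]
  refine (abs_fan_sub_fan_le hp t).trans (sum_le_sum fun j hj => ?_)
  exact mul_le_mul_of_nonneg_left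
    (abs_le.2 ⟨by linarith [(hc j hj).1], by linarith [(hc j hj).2]⟩) (hp j hj)

lemma step (hN : 1 ≤ N) (hp : ∀ j ∈ Icc 1 N, 0 ≤ p j) (hp1 : 0 < p 1) {a σ : ℕ → ℝ}
    (ha1 : 0 ≤ a 1) (ha : ∀ j ∈ Icc 1 N, a 1 ≤ a j) (hσ : ∀ j ∈ Icc 1 N, 0 ≤ σ j)
    (hσa : ∀ j ∈ Icc 1 N, fan N p (fun l => σ l - σ 1) (σ j) = a j) {y g : ℝ → ℝ}
    (hy : IsFanNear N p (fun l => σ l - σ 1) w y)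
    (hg : ∀ t, 0 ≤ t → g t = ∑ j ∈ Icc 1 N, p j * pos' (t - tinv y (a j) + tinv y (a 1))) :
    IsFanNear N p (fun l => σ l - σ 1) ((1 - p 1 / qq p N) * w) g := by
  obtain ⟨b, hb1, hb, hyb, c, hc⟩ := hy
  have hτ : ∀ j ∈ Icc 1 N, 0 ≤ tinv y (a j) ∧ fan N p b (tinv y (a j)) = a j := fun j hj =>
    tinv_of_eqOn_fan hN hp hp1 hb1 hb hyb (ha1.trans (ha j hj))
  have h1 := left_mem_Icc.2 hN
  have hdev : ∀ j ∈ Icc 1 N, tinv y (a j) - σ j ∈ Set.Icc ((1 - p 1 / qq p N) * c)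
      ((1 - p 1 / qq p N) * c + (1 - p 1 / qq p N) * w) := fun j hj =>
    sub_mem_Icc_of_fan_eq_fan hN hp hp1 hb1 (sub_self _) hc (hτ j hj).1 (hσ j hj)
      ((hτ j hj).2.trans (hσa j hj).symm)
  refine ⟨fun l => tinv y (a l) - tinv y (a 1), sub_self _, fun j hj => ?_,
    fun t ht => (hg t ht).trans (fan_sub_first _ t).symm,
    (1 - p 1 / qq p N) * c - (tinv y (a 1) - σ 1), fun j hj => ?_⟩
  · rw [sub_nonneg, ← (strictMonoOn_fan hN hp hp1 hb1).le_iff_le (hτ 1 h1).1 (hτ j hj).1,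
      (hτ 1 h1).2, (hτ j hj).2]
    exact ha j hj
  · have := hdev j hj
    rw [Set.mem_Icc] at this ⊢
    constructor <;> linarith

end IsFanNear

lemma isFanNear_of_le_rD {N : ℕ} {p : ℕ → ℝ} (hN : 1 ≤ N) (hp : ∀ j ∈ Icc 1 N, 0 < p j)
    {a b σ : ℕ → ℝ} (ha : ∀ j ∈ Icc 1 N, a j ∈ Set.Icc 0 (a N)) (hσ1 : 0 ≤ σ 1)
    (hσ : ∀ j ∈ Icc 1 N, σ j ∈ Set.Icc (σ 1) (σ N)) (hb1 : b 1 = 0)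
    (hb0 : ∀ j ∈ Icc 1 N, 0 ≤ b j)
    (hb : MonotoneOn b (Icc 1 N)) {y : ℝ → ℝ} (hy : Set.EqOn y (fan N p b) (Set.Ici 0))
    (hrD : ∀ i, 1 ≤ i → i ≤ N → ∀ t, 0 ≤ t → a i ≤ y t → qq p i ≤ rD y t) :
    IsFanNear N p (fun l => σ l - σ 1) (a N / p 1 + σ N) y := by
  have hp1 := hp 1 (left_mem_Icc.2 hN)
  refine ⟨b, hb1, hb0, hy, -σ N, fun j hj => ?_⟩
  have hbj : b j ≤ a j / p 1 :=
    le_div_of_le_rD hN (fun l hl => (hp l hl).le) hp1 hb1 hb hy hj (hp j hj) (ha j hj).1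
      (hrD j (mem_Icc.1 hj).1 (mem_Icc.1 hj).2)
  have haN : a j / p 1 ≤ a N / p 1 := div_le_div_of_nonneg_right (ha j hj).2 hp1.le
  rw [Set.mem_Icc]
  constructor <;> linarith [hb0 j hj, (hσ j hj).1, (hσ j hj).2]

lemma isFanNear_of_satisfiesR {N : ℕ} {a p s : ℕ → ℝ} {y : ℕ → ℝ → ℝ} (hN : 1 ≤ N)
    (hap : IsParam N a p) (hs : IsStationaryTuple N a p s) (hy : SatisfiesR N a p y)
    (hrD : ∀ i, 1 ≤ i → i ≤ N → ∀ t, 0 ≤ t → a i ≤ y 0 t → qq p i ≤ rD (y 0) t) (k : ℕ) :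
    IsFanNear N p (fun l => s l - s 1) ((1 - p 1 / qq p N) ^ k * (a N / p 1 + s N)) (y k) := by
  obtain ⟨ha1, ha, hp⟩ := hap
  obtain ⟨hs1, hs, hstat⟩ := hs
  obtain ⟨⟨c, hc1, hc0, hc, hy0⟩, hrec⟩ := hy
  replace hp : ∀ j ∈ Icc 1 N, 0 < p j := fun j hj => hp j (mem_Icc.1 hj).1 (mem_Icc.1 hj).2
  replace ha : ∀ j ∈ Icc 1 N, a j ∈ Set.Icc (a 1) (a N) := fun _ =>
    apply_mem_Icc_of_le_succ fun i h1 h2 => (ha i h1 h2).le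
  replace hs : ∀ j ∈ Icc 1 N, s j ∈ Set.Icc (s 1) (s N) := fun _ =>
    apply_mem_Icc_of_le_succ fun i h1 h2 => (hs i h1 h2).le
  induction k with
  | zero =>
    rw [pow_zero, one_mul]
    exact isFanNear_of_le_rD hN hp (fun j hj => ⟨ha1.le.trans (ha j hj).1, (ha j hj).2⟩) hs1.le
      hs hc1 (fun j hj => hc0 j (mem_Icc.1 hj).1 (mem_Icc.1 hj).2)
      (monotoneOn_Icc_of_le_succ hc) hy0 hrD
  | succ k ih =>
    rw [pow_succ', mul_assoc]
    exact ih.step hN (fun j hj => (hp j hj).le) (hp 1 (left_mem_Icc.2 hN)) ha1.le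
      (fun j hj => (ha j hj).1) (fun j hj => hs1.le.trans (hs j hj).1)
      (fun j hj => (fan_sub_first s (s j)).trans
        (hstat j (mem_Icc.1 hj).1 (mem_Icc.1 hj).2).symm) (hrec k)

end RecurrenceR

open Finset RecurrenceR in
/-- Exponential convergence to the stationary trajectory for sequences
satisfying recurrence (R) whose initial function moves at speed at least `q i` beyond `a i`. -/
theorem stmt_1 (N : ℕ) (hN : 1 ≤ N) (a p : ℕ → ℝ) (hap : IsParam N a p)
    (s : ℕ → ℝ) (hs : IsStationaryTuple N a p s) :
    ∃ κ : ℝ, 0 < κ ∧ (0 ≤ 1 - qq p 1 / qq p N ∧ 1 - qq p 1 / qq p N < 1) ∧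
      ∀ y : ℕ → ℝ → ℝ, SatisfiesR N a p y →
        (∀ i, 1 ≤ i → i ≤ N → ∀ t : ℝ, 0 ≤ t → a i ≤ y 0 t → qq p i ≤ rD (y 0) t) →
        ∀ k : ℕ, ∀ t : ℝ, 0 ≤ t →
          |y k t - ∑ j ∈ Finset.Icc 1 N, p j * pos' (t - s j + s 1)| ≤
            κ * (1 - qq p 1 / qq p N) ^ k := by
  have hp : ∀ j ∈ Icc 1 N, 0 ≤ p j := fun j hj =>
    (hap.2.2 j (mem_Icc.1 hj).1 (mem_Icc.1 hj).2).le
  have hp1 : 0 < p 1 := hap.2.2 1 le_rfl hN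
  have hq := qq_pos hN hp hp1
  have haN : 0 < a N := hap.1.trans_le
    (apply_mem_Icc_of_le_succ (fun i h1 h2 => (hap.2.1 i h1 h2).le) (right_mem_Icc.2 hN)).1
  have hsN : 0 < s N := hs.1.trans_le
    (apply_mem_Icc_of_le_succ (fun i h1 h2 => (hs.2.1 i h1 h2).le) (right_mem_Icc.2 hN)).1
  rw [qq_one]
  refine ⟨qq p N * (a N / p 1 + s N), by positivity,
    ⟨one_sub_div_qq_nonneg hN hp hp1, sub_lt_self _ (div_pos hp1 hq)⟩, fun y hy hrD k t ht => ?_⟩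
  rw [← fan_sub_first]
  calc _ ≤ qq p N * ((1 - p 1 / qq p N) ^ k * (a N / p 1 + s N)) :=
        (isFanNear_of_satisfiesR hN hap hs hy hrD k).abs_sub_fan_le hN hp (sub_self _) ht
    _ = _ := by ring
end

section
/- Let (a,p) ∈ P^{2N} and let (y_k^{(1)})_{k≥0} and (y_k^{(2)})_{k≥0} be two sequences of functions satisfying recurrence (R), with inverse functions t_k^{(m)} and right derivative functions v_k^{(m)} for m = 1,2. If v_0^{(1)}(t_0^{(1)}(x)) ≤ v_0^{(2)}(t_0^{(2)}(x)) for every x ≥ 0, then for every k ≥ 1 and every x ≥ 0, v_k^{(1)}(t_k^{(1)}(x)) ≤ v_k^{(2)}(t_k^{(2)}(x)). -/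
open Filter Topology
open scoped Classical

/-!
Every `y k` is a ramp sum `t ↦ ∑ j, p j * (t - b j)₊` with non-decreasing breakpoints `b`, and
`v k (t k x) = ∑ {p j | y k (b j) ≤ x}`; so comparing `v k ∘ t k` amounts to comparing, in reverse
order, the levels `y k (b j)`. The inverse `t k` is piecewise linear with slope `1 / q m` between
the `m`-th and `(m+1)`-st level, so lower levels make `t k` grow more slowly. Since the levels of
`y (k + 1)` are `∑ l, p l * (t k (a j) - t k (a l))₊`, the order of the levels passes from step `k`
to step `k + 1`.
-/

open Finset

lemma monotoneOn_Icc_of_le_succ {α : Type*} [Preorder α] {N : ℕ} {f : ℕ → α}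
    (h : ∀ i, 1 ≤ i → i < N → f i ≤ f (i + 1)) : MonotoneOn f (Set.Icc 1 N) :=
  monotoneOn_of_le_succ Set.ordConnected_Icc fun i _ hi hi' =>
    h i hi.1 (Nat.succ_le_iff.mp hi'.2)

lemma pos'_eq_self {x : ℝ} (h : 0 ≤ x) : pos' x = x := max_eq_left h

lemma pos'_eq_zero {x : ℝ} (h : x ≤ 0) : pos' x = 0 := max_eq_right h

lemma pos'_nonneg (x : ℝ) : 0 ≤ pos' x := le_max_right _ _

lemma pos'_monotone : Monotone pos' := fun _ _ h => max_le_max_right 0 h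

lemma min_sub_min_le_min_sub_min {x y b b' : ℝ} (hxy : x ≤ y) (hb : b' ≤ b) :
    min y b' - min x b' ≤ min y b - min x b := by
  simp only [min_def]
  split_ifs <;> linarith

section PartialSums

variable {N : ℕ} {p : ℕ → ℝ}

lemma qq_succ (p : ℕ → ℝ) (i : ℕ) : qq p (i + 1) = qq p i + p (i + 1) :=
  sum_Icc_succ_top (by omega) _

lemma qq_pos (hp : ∀ i ∈ Icc 1 N, 0 < p i) {i : ℕ} (hi : i ∈ Icc 1 N) : 0 < qq p i :=
  sum_pos (fun j hj => hp j (Icc_subset_Icc_right (mem_Icc.1 hi).2 hj))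
    ⟨1, mem_Icc.2 ⟨le_rfl, (mem_Icc.1 hi).1⟩⟩

lemma qq_le_qq (hp : ∀ i ∈ Icc 1 N, 0 ≤ p i) {i j : ℕ} (hij : i ≤ j) (hj : j ≤ N) :
    qq p i ≤ qq p j :=
  sum_le_sum_of_subset_of_nonneg (Icc_subset_Icc_right hij) fun k hk _ =>
    hp k (Icc_subset_Icc_right hj hk)

/-- The drop of the slope of the inverse of a ramp sum at its `j`-th level. -/
noncomputable def slopeDrop (p : ℕ → ℝ) (j : ℕ) : ℝ := 1 / qq p (j - 1) - 1 / qq p j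

lemma slopeDrop_nonneg (hp : ∀ i ∈ Icc 1 N, 0 < p i) {j : ℕ} (hj : j ∈ Ioc 1 N) :
    0 ≤ slopeDrop p j := by
  obtain ⟨hj1, hjN⟩ := mem_Ioc.1 hj
  exact sub_nonneg.2 (one_div_le_one_div_of_le (qq_pos hp (mem_Icc.2 ⟨by omega, by omega⟩))
    (qq_le_qq (fun i hi => (hp i hi).le) (by omega) hjN))

lemma sum_Ioc_slopeDrop (p : ℕ → ℝ) {m M : ℕ} (hm : m ≤ M) :
    ∑ j ∈ Ioc m M, slopeDrop p j = 1 / qq p m - 1 / qq p M := by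
  induction M, hm using Nat.le_induction with
  | base => simp
  | succ M hM ih =>
    rw [sum_Ioc_succ_top hM, ih, slopeDrop, Nat.add_sub_cancel]
    ring

end PartialSums

section RampSums

variable {N : ℕ} {p s : ℕ → ℝ}

/-- The value of `trajOfS N p s` at its `j`-th breakpoint `s j - s 1`. -/
def level (N : ℕ) (p s : ℕ → ℝ) (j : ℕ) : ℝ := ∑ l ∈ Icc 1 N, p l * pos' (s j - s l)

lemma trajOfS_sub_self (j : ℕ) : trajOfS N p s (s j - s 1) = level N p s j := by
  unfold trajOfS level
  congr! 3
  ring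

lemma trajOfS_monotone (hp : ∀ i ∈ Icc 1 N, 0 ≤ p i) : Monotone (trajOfS N p s) :=
  fun _ _ h => sum_le_sum fun j hj =>
    mul_le_mul_of_nonneg_left (pos'_monotone (by linarith)) (hp j hj)

lemma trajOfS_nonneg (hp : ∀ i ∈ Icc 1 N, 0 ≤ p i) (t : ℝ) : 0 ≤ trajOfS N p s t :=
  sum_nonneg fun j hj => mul_nonneg (hp j hj) (pos'_nonneg _)

lemma trajOfS_zero (hs : MonotoneOn s (Set.Icc 1 N)) : trajOfS N p s 0 = 0 :=
  sum_eq_zero fun j hj => by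
    have hsj := hs ⟨le_rfl, (mem_Icc.1 hj).1.trans (mem_Icc.1 hj).2⟩ (mem_Icc.1 hj)
      (mem_Icc.1 hj).1
    rw [pos'_eq_zero (by linarith), mul_zero]

lemma mul_le_trajOfS (hp : ∀ i ∈ Icc 1 N, 0 ≤ p i) (hN : 1 ≤ N) {t : ℝ} (ht : 0 ≤ t) :
    p 1 * t ≤ trajOfS N p s t := by
  have h1 : p 1 * pos' (t - s 1 + s 1) = p 1 * t := by rw [sub_add_cancel, pos'_eq_self ht]
  rw [← h1]
  exact single_le_sum (f := fun j => p j * pos' (t - s j + s 1))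
    (fun j hj => mul_nonneg (hp j hj) (pos'_nonneg _)) (mem_Icc.2 ⟨le_rfl, hN⟩)

lemma trajOfS_strictMonoOn (hp : ∀ i ∈ Icc 1 N, 0 < p i) (hN : 1 ≤ N) :
    StrictMonoOn (trajOfS N p s) (Set.Ici 0) := by
  intro u hu t ht hut
  have hN1 : 1 ∈ Icc 1 N := mem_Icc.2 ⟨le_rfl, hN⟩
  refine sum_lt_sum (fun j hj => mul_le_mul_of_nonneg_left
    (pos'_monotone (by linarith)) (hp j hj).le) ⟨1, hN1, ?_⟩
  rw [sub_add_cancel, sub_add_cancel, pos'_eq_self hu, pos'_eq_self ht]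
  exact mul_lt_mul_of_pos_left hut (hp 1 hN1)

lemma surjOn_trajOfS (hp : ∀ i ∈ Icc 1 N, 0 < p i) (hN : 1 ≤ N)
    (hs : MonotoneOn s (Set.Icc 1 N)) :
    Set.SurjOn (trajOfS N p s) (Set.Ici 0) (Set.Ici 0) := by
  intro x (hx : 0 ≤ x)
  have hp1 : 0 < p 1 := hp 1 (mem_Icc.2 ⟨le_rfl, hN⟩)
  have hM : 0 ≤ x / p 1 := div_nonneg hx hp1.le
  have hcont : Continuous (trajOfS N p s) := by unfold trajOfS pos'; fun_prop
  have hx_mem : x ∈ Set.Icc (trajOfS N p s 0) (trajOfS N p s (x / p 1)) := by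
    refine ⟨by rwa [trajOfS_zero hs], ?_⟩
    calc x = p 1 * (x / p 1) := (mul_div_cancel₀ x hp1.ne').symm
      _ ≤ _ := mul_le_trajOfS (fun i hi => (hp i hi).le) hN hM
  obtain ⟨t, ht, rfl⟩ := intermediate_value_Icc hM hcont.continuousOn hx_mem
  exact ⟨t, ht.1, rfl⟩

lemma tinv_trajOfS_mem (hp : ∀ i ∈ Icc 1 N, 0 < p i) (hN : 1 ≤ N)
    (hs : MonotoneOn s (Set.Icc 1 N)) {x : ℝ} (hx : 0 ≤ x) :
    0 ≤ tinv (trajOfS N p s) x ∧ trajOfS N p s (tinv (trajOfS N p s) x) = x :=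
  Function.invFunOn_pos (surjOn_trajOfS hp hN hs hx)

lemma tinv_trajOfS_apply (hp : ∀ i ∈ Icc 1 N, 0 < p i) (hN : 1 ≤ N) {t : ℝ} (ht : 0 ≤ t) :
    tinv (trajOfS N p s) (trajOfS N p s t) = t :=
  (trajOfS_strictMonoOn hp hN).injOn.leftInvOn_invFunOn ht

end RampSums

section Inverse

variable {N : ℕ} {p s s' : ℕ → ℝ}

lemma sum_Icc_one_eq_add_sum_Ioc {m : ℕ} (hm : m ≤ N) (f : ℕ → ℝ) :
    ∑ j ∈ Icc 1 N, f j = ∑ j ∈ Icc 1 m, f j + ∑ j ∈ Ioc m N, f j := by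
  rw [show Icc 1 N = Ioc 0 N from Icc_add_one_left_eq_Ioc 0 N,
    show Icc 1 m = Ioc 0 m from Icc_add_one_left_eq_Ioc 0 m,
    sum_Ioc_consecutive _ (Nat.zero_le m) hm]

lemma trajOfS_eq_qq_mul_sub (hs : MonotoneOn s (Set.Icc 1 N)) {m : ℕ} (hm : m ∈ Icc 1 N) {t : ℝ}
    (hmt : s m - s 1 ≤ t) (htm : ∀ l ∈ Ioc m N, t ≤ s l - s 1) :
    trajOfS N p s t = qq p m * t - ∑ l ∈ Icc 1 m, p l * (s l - s 1) := by
  obtain ⟨hm1, hmN⟩ := mem_Icc.1 hm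
  have below : ∀ l ∈ Icc 1 m, p l * pos' (t - s l + s 1) = p l * t - p l * (s l - s 1) := by
    intro l hl
    have := hs ⟨(mem_Icc.1 hl).1, (mem_Icc.1 hl).2.trans hmN⟩ ⟨hm1, hmN⟩ (mem_Icc.1 hl).2
    rw [pos'_eq_self (by linarith)]
    ring
  have above : ∀ l ∈ Ioc m N, p l * pos' (t - s l + s 1) = 0 := by
    intro l hl
    rw [pos'_eq_zero (by linarith [htm l hl]), mul_zero]
  rw [trajOfS, sum_Icc_one_eq_add_sum_Ioc hmN, sum_congr rfl below, sum_congr rfl above,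
    sum_const_zero, add_zero, sum_sub_distrib, ← sum_mul, qq]

lemma level_eq (hs : MonotoneOn s (Set.Icc 1 N)) {j : ℕ} (hj : j ∈ Icc 1 N) :
    level N p s j = qq p j * (s j - s 1) - ∑ l ∈ Icc 1 j, p l * (s l - s 1) := by
  rw [← trajOfS_sub_self]
  exact trajOfS_eq_qq_mul_sub hs hj le_rfl fun l hl =>
    sub_le_sub_right (hs (mem_Icc.1 hj) ⟨by linarith [(mem_Ioc.1 hl).1, (mem_Icc.1 hj).1],
      (mem_Ioc.1 hl).2⟩ (mem_Ioc.1 hl).1.le) _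

lemma sum_Ioc_mul_level (hp : ∀ i ∈ Icc 1 N, 0 < p i) (hs : MonotoneOn s (Set.Icc 1 N))
    {m : ℕ} (hm : m ∈ Icc 1 N) :
    ∑ j ∈ Ioc 1 m, slopeDrop p j * level N p s j = (∑ l ∈ Icc 1 m, p l * (s l - s 1)) / qq p m := by
  obtain ⟨hm1, hmN⟩ := mem_Icc.1 hm
  induction m, hm1 using Nat.le_induction with
  | base => simp
  | succ m hm1 ih =>
    have hq : 0 < qq p m := qq_pos hp (mem_Icc.2 ⟨hm1, by omega⟩)
    have hq' : 0 < qq p m + p (m + 1) := qq_succ p m ▸ qq_pos hp hm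
    rw [sum_Ioc_succ_top hm1, ih (mem_Icc.2 ⟨hm1, by omega⟩) (by omega), level_eq hs hm,
      sum_Icc_succ_top (by omega), slopeDrop, Nat.add_sub_cancel, qq_succ]
    field_simp
    ring

/-- The inverse of `trajOfS N p s` on `[0, ∞)`, which is linear of slope `1 / qq p m` between
the levels `m` and `m + 1`. -/
noncomputable def invTraj (N : ℕ) (p s : ℕ → ℝ) (x : ℝ) : ℝ :=
  x / qq p N + ∑ j ∈ Ioc 1 N, slopeDrop p j * min x (level N p s j)

lemma invTraj_trajOfS (hp : ∀ i ∈ Icc 1 N, 0 < p i) (hN : 1 ≤ N)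
    (hs : MonotoneOn s (Set.Icc 1 N)) {t : ℝ} (ht : 0 ≤ t) :
    invTraj N p s (trajOfS N p s t) = t := by
  obtain ⟨m, hmA, hmax⟩ := ((Icc 1 N).filter fun j => s j - s 1 ≤ t).exists_max_image id
    ⟨1, mem_filter.2 ⟨mem_Icc.2 ⟨le_rfl, hN⟩, by rwa [sub_self]⟩⟩
  obtain ⟨hm, hmt⟩ := mem_filter.1 hmA
  obtain ⟨hm1, hmN⟩ := mem_Icc.1 hm
  have above : ∀ j ∈ Ioc m N, t ≤ s j - s 1 := fun j hj => by
    obtain ⟨hmj, hjN⟩ := mem_Ioc.1 hj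
    by_contra! h
    exact not_le.2 hmj (hmax j (mem_filter.2 ⟨mem_Icc.2 ⟨by omega, hjN⟩, h.le⟩))
  have hp₀ : ∀ i ∈ Icc 1 N, 0 ≤ p i := fun i hi => (hp i hi).le
  have hmin_below : ∀ j ∈ Ioc 1 m,
      slopeDrop p j * min (trajOfS N p s t) (level N p s j) = slopeDrop p j * level N p s j := by
    intro j hj
    obtain ⟨hj1, hjm⟩ := mem_Ioc.1 hj
    have hlevel : level N p s j ≤ trajOfS N p s t := by
      rw [← trajOfS_sub_self]
      exact trajOfS_monotone hp₀
        ((sub_le_sub_right (hs ⟨hj1.le, hjm.trans hmN⟩ ⟨hm1, hmN⟩ hjm) _).trans hmt)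
    rw [min_eq_right hlevel]
  have hmin_above : ∀ j ∈ Ioc m N,
      slopeDrop p j * min (trajOfS N p s t) (level N p s j) = slopeDrop p j * trajOfS N p s t :=
    fun j hj => by
      rw [min_eq_left (trajOfS_sub_self (p := p) j ▸ trajOfS_monotone hp₀ (above j hj))]
  have hqm : 0 < qq p m := qq_pos hp hm
  have hqN : 0 < qq p N := qq_pos hp (mem_Icc.2 ⟨hN, le_rfl⟩)
  rw [invTraj, ← sum_Ioc_consecutive _ hm1 hmN, sum_congr rfl hmin_below, sum_congr rfl hmin_above,
    ← sum_mul, sum_Ioc_mul_level hp hs hm, sum_Ioc_slopeDrop p hmN,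
    trajOfS_eq_qq_mul_sub hs hm hmt above]
  field_simp
  ring

lemma tinv_trajOfS_eq_invTraj (hp : ∀ i ∈ Icc 1 N, 0 < p i) (hN : 1 ≤ N)
    (hs : MonotoneOn s (Set.Icc 1 N)) {x : ℝ} (hx : 0 ≤ x) :
    tinv (trajOfS N p s) x = invTraj N p s x := by
  obtain ⟨t, ht, rfl⟩ := surjOn_trajOfS hp hN hs hx
  rw [tinv_trajOfS_apply hp hN ht, invTraj_trajOfS hp hN hs ht]

lemma invTraj_monotone (hp : ∀ i ∈ Icc 1 N, 0 < p i) (hN : 1 ≤ N) :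
    Monotone (invTraj N p s) := fun _ _ hxy =>
  add_le_add (div_le_div_of_nonneg_right hxy (qq_pos hp (mem_Icc.2 ⟨hN, le_rfl⟩)).le)
    (sum_le_sum fun _ hj =>
      mul_le_mul_of_nonneg_left (min_le_min_right _ hxy) (slopeDrop_nonneg hp hj))

lemma invTraj_sub_invTraj_le (hp : ∀ i ∈ Icc 1 N, 0 < p i)
    (hlevel : ∀ j ∈ Icc 1 N, level N p s' j ≤ level N p s j) {x y : ℝ} (hxy : x ≤ y) :
    invTraj N p s' y - invTraj N p s' x ≤ invTraj N p s y - invTraj N p s x := by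
  have key := sum_le_sum fun j (hj : j ∈ Ioc 1 N) => mul_le_mul_of_nonneg_left
    (min_sub_min_le_min_sub_min hxy (hlevel j (Ioc_subset_Icc_self hj))) (slopeDrop_nonneg hp hj)
  simp only [mul_sub, sum_sub_distrib] at key
  simp only [invTraj]
  linarith

lemma pos'_invTraj_sub_invTraj_le (hp : ∀ i ∈ Icc 1 N, 0 < p i) (hN : 1 ≤ N)
    (hlevel : ∀ j ∈ Icc 1 N, level N p s' j ≤ level N p s j) (x y : ℝ) :
    pos' (invTraj N p s' y - invTraj N p s' x) ≤ pos' (invTraj N p s y - invTraj N p s x) := by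
  rcases le_total x y with hxy | hyx
  · exact pos'_monotone (invTraj_sub_invTraj_le hp hlevel hxy)
  · rw [pos'_eq_zero (sub_nonpos.2 (invTraj_monotone hp hN hyx))]
    exact pos'_nonneg _

end Inverse

section Rates

variable {N : ℕ} {p s s₁ s₂ a : ℕ → ℝ}

/-- `v (t x)` in the paper's notation, for `v` the right derivative and `t` the inverse of `y`. -/
noncomputable def rateAt (y : ℝ → ℝ) (x : ℝ) : ℝ := rD y (tinv y x)

lemma tinv_congr {f g : ℝ → ℝ} (h : Set.EqOn f g (Set.Ici 0)) : tinv f = tinv g := by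
  funext x
  have hpred : (fun t => t ∈ Set.Ici (0 : ℝ) ∧ f t = x) = fun t => t ∈ Set.Ici 0 ∧ g t = x :=
    funext fun t => propext (and_congr_right fun ht => by rw [h ht])
  unfold tinv Function.invFunOn
  rw [hpred]

lemma rD_congr {f g : ℝ → ℝ} {t : ℝ} (h : Set.EqOn f g (Set.Ici t)) : rD f t = rD g t :=
  derivWithin_congr h (h Set.self_mem_Ici)

lemma hasDerivWithinAt_pos'_sub (c t : ℝ) :
    HasDerivWithinAt (fun u => pos' (u - c)) (if c ≤ t then 1 else 0) (Set.Ici t) t := by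
  split_ifs with h
  · exact ((hasDerivAt_id t).sub_const c).hasDerivWithinAt.congr
      (fun u (hu : t ≤ u) => pos'_eq_self (by linarith)) (pos'_eq_self (by linarith))
  · have hev : (fun u => pos' (u - c)) =ᶠ[𝓝[Set.Ici t] t] fun _ => 0 := by
      filter_upwards [mem_nhdsWithin_of_mem_nhds (Iio_mem_nhds (not_le.1 h))] with u hu
      exact pos'_eq_zero (by linarith [Set.mem_Iio.1 hu])
    exact (hasDerivWithinAt_const t _ 0).congr_of_eventuallyEq hev
      (pos'_eq_zero (by linarith [not_le.1 h]))

lemma rD_trajOfS (t : ℝ) :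
    rD (trajOfS N p s) t = ∑ j ∈ (Icc 1 N).filter fun j => s j - s 1 ≤ t, p j := by
  have hY : trajOfS N p s = fun u => ∑ j ∈ Icc 1 N, p j * pos' (u - (s j - s 1)) := by
    funext u
    simp only [trajOfS, sub_add]
  have hderiv := HasDerivWithinAt.fun_sum (u := Icc 1 N) fun j _ =>
    (hasDerivWithinAt_pos'_sub (s j - s 1) t).const_mul (p j)
  rw [rD, hY, hderiv.derivWithin (uniqueDiffOn_Ici t t Set.self_mem_Ici), sum_filter]
  simp only [mul_ite, mul_one, mul_zero]

lemma level_nonneg (hp : ∀ i ∈ Icc 1 N, 0 ≤ p i) (j : ℕ) : 0 ≤ level N p s j :=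
  trajOfS_sub_self (p := p) j ▸ trajOfS_nonneg hp _

lemma level_monotoneOn (hp : ∀ i ∈ Icc 1 N, 0 ≤ p i) (hs : MonotoneOn s (Set.Icc 1 N)) :
    MonotoneOn (level N p s) (Set.Icc 1 N) := fun i hi j hj hij => by
  rw [← trajOfS_sub_self, ← trajOfS_sub_self]
  exact trajOfS_monotone hp (sub_le_sub_right (hs hi hj hij) _)

lemma rateAt_eq_sum_filter (hp : ∀ i ∈ Icc 1 N, 0 < p i) (hN : 1 ≤ N)
    (hs : MonotoneOn s (Set.Icc 1 N)) {y : ℝ → ℝ} (hy : Set.EqOn y (trajOfS N p s) (Set.Ici 0))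
    {x : ℝ} (hx : 0 ≤ x) :
    rateAt y x = ∑ j ∈ (Icc 1 N).filter fun j => level N p s j ≤ x, p j := by
  obtain ⟨ht, hYt⟩ := tinv_trajOfS_mem hp hN hs hx
  rw [rateAt, tinv_congr hy, rD_congr (hy.mono (Set.Ici_subset_Ici.2 ht)), rD_trajOfS]
  refine sum_congr (filter_congr fun j hj => ?_) fun _ _ => rfl
  obtain ⟨hj1, hjN⟩ := mem_Icc.1 hj
  have hj0 : 0 ≤ s j - s 1 := sub_nonneg.2 (hs ⟨le_rfl, hj1.trans hjN⟩ ⟨hj1, hjN⟩ hj1)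
  exact ((trajOfS_strictMonoOn hp hN).le_iff_le hj0 ht).symm.trans
    (by rw [trajOfS_sub_self, hYt])

lemma le_of_sum_filter_le_sum_filter {w β β' : ℕ → ℝ} (hw : ∀ i ∈ Icc 1 N, 0 < w i)
    (hβ : MonotoneOn β (Set.Icc 1 N)) (hβ' : MonotoneOn β' (Set.Icc 1 N)) {i : ℕ}
    (hi : i ∈ Icc 1 N)
    (h : ∑ j ∈ (Icc 1 N).filter (fun j => β j ≤ β i), w j
      ≤ ∑ j ∈ (Icc 1 N).filter (fun j => β' j ≤ β i), w j) :
    β' i ≤ β i := by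
  by_contra! hlt
  have hsub : (Icc 1 N).filter (fun j => β' j ≤ β i) ⊆ (Icc 1 N).filter (fun j => β j ≤ β i) := by
    intro j hj
    obtain ⟨hjN, hj⟩ := mem_filter.1 hj
    have hji : j ≤ i := by
      by_contra! hij
      linarith [hβ' (mem_Icc.1 hi) (mem_Icc.1 hjN) hij.le]
    exact mem_filter.2 ⟨hjN, hβ (mem_Icc.1 hjN) (mem_Icc.1 hi) hji⟩
  have := sum_lt_sum_of_subset hsub (mem_filter.2 ⟨hi, le_rfl⟩)
    (fun hi' => (mem_filter.1 hi').2.not_gt hlt) (hw i hi)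
    fun j hj _ => (hw j (mem_filter.1 hj).1).le
  linarith

lemma level_le_of_rateAt_le (hp : ∀ i ∈ Icc 1 N, 0 < p i) (hN : 1 ≤ N)
    (hs₁ : MonotoneOn s₁ (Set.Icc 1 N)) (hs₂ : MonotoneOn s₂ (Set.Icc 1 N)) {y₁ y₂ : ℝ → ℝ}
    (hy₁ : Set.EqOn y₁ (trajOfS N p s₁) (Set.Ici 0))
    (hy₂ : Set.EqOn y₂ (trajOfS N p s₂) (Set.Ici 0))
    (h : ∀ x : ℝ, 0 ≤ x → rateAt y₁ x ≤ rateAt y₂ x) :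
    ∀ i ∈ Icc 1 N, level N p s₂ i ≤ level N p s₁ i := fun i hi => by
  have hp₀ : ∀ i ∈ Icc 1 N, 0 ≤ p i := fun i hi => (hp i hi).le
  have hx := level_nonneg (s := s₁) hp₀ i
  have := h _ hx
  rw [rateAt_eq_sum_filter hp hN hs₁ hy₁ hx, rateAt_eq_sum_filter hp hN hs₂ hy₂ hx] at this
  exact le_of_sum_filter_le_sum_filter hp (level_monotoneOn hp₀ hs₁) (level_monotoneOn hp₀ hs₂)
    hi this

lemma rateAt_le_of_level_le (hp : ∀ i ∈ Icc 1 N, 0 < p i) (hN : 1 ≤ N)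
    (hs₁ : MonotoneOn s₁ (Set.Icc 1 N)) (hs₂ : MonotoneOn s₂ (Set.Icc 1 N)) {y₁ y₂ : ℝ → ℝ}
    (hy₁ : Set.EqOn y₁ (trajOfS N p s₁) (Set.Ici 0))
    (hy₂ : Set.EqOn y₂ (trajOfS N p s₂) (Set.Ici 0))
    (hlevel : ∀ i ∈ Icc 1 N, level N p s₂ i ≤ level N p s₁ i) {x : ℝ} (hx : 0 ≤ x) :
    rateAt y₁ x ≤ rateAt y₂ x := by
  rw [rateAt_eq_sum_filter hp hN hs₁ hy₁ hx, rateAt_eq_sum_filter hp hN hs₂ hy₂ hx]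
  refine sum_le_sum_of_subset_of_nonneg (fun j hj => ?_)
    fun j hj _ => (hp j (mem_filter.1 hj).1).le
  obtain ⟨hjN, hj⟩ := mem_filter.1 hj
  exact mem_filter.2 ⟨hjN, (hlevel j hjN).trans hj⟩

end Rates

section Recurrence

variable {N : ℕ} {a p s s₁ s₂ : ℕ → ℝ}

lemma monotoneOn_tinv_trajOfS_comp (hp : ∀ i ∈ Icc 1 N, 0 < p i) (hN : 1 ≤ N)
    (hs : MonotoneOn s (Set.Icc 1 N)) (ha : MonotoneOn a (Set.Icc 1 N))
    (ha₀ : ∀ j ∈ Icc 1 N, 0 ≤ a j) :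
    MonotoneOn (tinv (trajOfS N p s) ∘ a) (Set.Icc 1 N) := fun i hi j hj hij => by
  simp only [Function.comp_apply]
  rw [tinv_trajOfS_eq_invTraj hp hN hs (ha₀ i (mem_Icc.2 hi)),
    tinv_trajOfS_eq_invTraj hp hN hs (ha₀ j (mem_Icc.2 hj))]
  exact invTraj_monotone hp hN (ha hi hj hij)

lemma level_tinv_trajOfS_comp_le (hp : ∀ i ∈ Icc 1 N, 0 < p i) (hN : 1 ≤ N)
    (hs₁ : MonotoneOn s₁ (Set.Icc 1 N)) (hs₂ : MonotoneOn s₂ (Set.Icc 1 N))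
    (ha₀ : ∀ j ∈ Icc 1 N, 0 ≤ a j) (hlevel : ∀ j ∈ Icc 1 N, level N p s₂ j ≤ level N p s₁ j) :
    ∀ i ∈ Icc 1 N, level N p (tinv (trajOfS N p s₂) ∘ a) i
      ≤ level N p (tinv (trajOfS N p s₁) ∘ a) i := fun i hi =>
  sum_le_sum fun l hl => by
    refine mul_le_mul_of_nonneg_left ?_ (hp l hl).le
    simp only [Function.comp_apply, tinv_trajOfS_eq_invTraj hp hN hs₁ (ha₀ _ hi),
      tinv_trajOfS_eq_invTraj hp hN hs₁ (ha₀ _ hl), tinv_trajOfS_eq_invTraj hp hN hs₂ (ha₀ _ hi),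
      tinv_trajOfS_eq_invTraj hp hN hs₂ (ha₀ _ hl)]
    exact pos'_invTraj_sub_invTraj_le hp hN hlevel _ _

lemma SatisfiesR.exists_eqOn_trajOfS_zero {y : ℕ → ℝ → ℝ} (h : SatisfiesR N a p y) :
    ∃ c, MonotoneOn c (Set.Icc 1 N) ∧ Set.EqOn (y 0) (trajOfS N p c) (Set.Ici 0) :=
  let ⟨c, hc₁, _, hc, hy⟩ := h.1
  ⟨c, monotoneOn_Icc_of_le_succ hc, fun t ht => by simp only [hy t ht, trajOfS, hc₁, add_zero]⟩

lemma SatisfiesR.eqOn_succ {y : ℕ → ℝ → ℝ} (h : SatisfiesR N a p y) {k : ℕ}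
    (hy : Set.EqOn (y k) (trajOfS N p s) (Set.Ici 0)) :
    Set.EqOn (y (k + 1)) (trajOfS N p (tinv (trajOfS N p s) ∘ a)) (Set.Ici 0) := fun t ht => by
  rw [h.2 k t ht, ← tinv_congr hy]
  rfl

lemma SatisfiesR.exists_eqOn_trajOfS {y : ℕ → ℝ → ℝ} (h : SatisfiesR N a p y)
    (hp : ∀ i ∈ Icc 1 N, 0 < p i) (hN : 1 ≤ N) (ha : MonotoneOn a (Set.Icc 1 N))
    (ha₀ : ∀ j ∈ Icc 1 N, 0 ≤ a j) :
    ∀ k, ∃ s, MonotoneOn s (Set.Icc 1 N) ∧ Set.EqOn (y k) (trajOfS N p s) (Set.Ici 0)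
  | 0 => h.exists_eqOn_trajOfS_zero
  | k + 1 =>
    let ⟨_, hs, hy⟩ := h.exists_eqOn_trajOfS hp hN ha ha₀ k
    ⟨_, monotoneOn_tinv_trajOfS_comp hp hN hs ha ha₀, h.eqOn_succ hy⟩

end Recurrence

/-- monotonicity property, Lemma 3.4 of the paper. -/
theorem stmt_2 (N : ℕ) (hN : 1 ≤ N) (a p : ℕ → ℝ) (hap : IsParam N a p)
    (y1 y2 : ℕ → ℝ → ℝ) (h1 : SatisfiesR N a p y1) (h2 : SatisfiesR N a p y2)
    (h0 : ∀ x : ℝ, 0 ≤ x → rD (y1 0) (tinv (y1 0) x) ≤ rD (y2 0) (tinv (y2 0) x)) :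
    ∀ k : ℕ, 1 ≤ k → ∀ x : ℝ, 0 ≤ x →
      rD (y1 k) (tinv (y1 k) x) ≤ rD (y2 k) (tinv (y2 k) x) := by
  obtain ⟨ha₁, ha_lt, hp⟩ := hap
  replace hp : ∀ i ∈ Icc 1 N, 0 < p i := fun i hi => hp i (mem_Icc.1 hi).1 (mem_Icc.1 hi).2
  have ha : MonotoneOn a (Set.Icc 1 N) :=
    monotoneOn_Icc_of_le_succ fun i hi hiN => (ha_lt i hi hiN).le
  have ha₀ : ∀ j ∈ Icc 1 N, 0 ≤ a j := fun j hj =>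
    ha₁.le.trans (ha ⟨le_rfl, hN⟩ (mem_Icc.1 hj) (mem_Icc.1 hj).1)
  suffices h : ∀ k, ∀ x : ℝ, 0 ≤ x → rateAt (y1 k) x ≤ rateAt (y2 k) x from fun k _ => h k
  intro k
  induction k with
  | zero => exact h0
  | succ k ih =>
    obtain ⟨s₁, hs₁, hy₁⟩ := h1.exists_eqOn_trajOfS hp hN ha ha₀ k
    obtain ⟨s₂, hs₂, hy₂⟩ := h2.exists_eqOn_trajOfS hp hN ha ha₀ k
    have hlevel := level_le_of_rateAt_le hp hN hs₁ hs₂ hy₁ hy₂ ih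
    exact fun x hx => rateAt_le_of_level_le hp hN (monotoneOn_tinv_trajOfS_comp hp hN hs₁ ha ha₀)
      (monotoneOn_tinv_trajOfS_comp hp hN hs₂ ha ha₀) (h1.eqOn_succ hy₁) (h2.eqOn_succ hy₂)
      (level_tinv_trajOfS_comp_le hp hN hs₁ hs₂ ha₀ hlevel) hx
end
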